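/- arXiv:1907.02301 — 2 statements merged into one kernel-verified Lean document; each statement's English description precedes it below -/
import Mathlib

section
/- Let L be a category with coequalizers of kernel pairs and with cokernel pairs, and let J : D ↪ L be the inclusion of a full weakly reflective subcategory such that for every object X of L a weak reflection X → S into D can be chosen to be a regular monomorphism. Then D is codense in L: the functor L^op → [D, Set] sending X to Hom_L(X, J−) is fully faithful. -/
open CategoryTheory CategoryTheory.Limits Opposite

universe w v u

namespace Paper

variable {C : Type u} [Category.{v} C]

/-- An object is finitely presentable if its covariant hom-functor preserves
small filtered colimits. -/
def FinPres (A : C) : Prop :=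
  ∀ (J : Type v) (_ : SmallCategory J), IsFiltered J →
    PreservesColimitsOfShape J (coyoneda.obj (op A))

/-- `f` is a regular epimorphism (a coequalizer of some pair). -/
def IsRegEpi {X Y : C} (f : X ⟶ Y) : Prop := Nonempty (RegularEpi f)

/-- `P` is regular projective: `Hom(P,-)` sends regular epimorphisms to surjections. -/
def RegProjective (P : C) : Prop :=
  ∀ ⦃X Y : C⦄ (f : X ⟶ Y), IsRegEpi f → Function.Surjective (fun g : P ⟶ X => g ≫ f)

/-- A regular category: finite limits, coequalizers of kernel pairs, and regular
epimorphisms stable under pullback. -/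
structure IsRegularCategory (C : Type u) [Category.{v} C] : Prop where
  hasFiniteLimits : HasFiniteLimits C
  hasCoequalizersOfKernelPairs :
    ∀ {X Y R : C} (f : X ⟶ Y) (p q : R ⟶ X), IsKernelPair f p q → HasCoequalizer p q
  regEpiPullbackStable :
    ∀ {P X Y Z : C} (fst : P ⟶ X) (snd : P ⟶ Y) (f : X ⟶ Z) (g : Y ⟶ Z),
      IsPullback fst snd f g → IsRegEpi f → IsRegEpi snd

/-- `(p, q)` is an internal equivalence relation on `X` (via generalized elements). -/
structure IsEquivalenceRelationPair {R X : C} (p q : R ⟶ X) : Prop where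
  jointly_mono : ∀ {Z : C} (a b : Z ⟶ R), a ≫ p = b ≫ p → a ≫ q = b ≫ q → a = b
  refl : ∀ {Z : C} (x : Z ⟶ X), ∃ r : Z ⟶ R, r ≫ p = x ∧ r ≫ q = x
  symm : ∀ {Z : C} (r : Z ⟶ R), ∃ s : Z ⟶ R, s ≫ p = r ≫ q ∧ s ≫ q = r ≫ p
  trans : ∀ {Z : C} (r s : Z ⟶ R), r ≫ q = s ≫ p →
    ∃ t : Z ⟶ R, t ≫ p = r ≫ p ∧ t ≫ q = s ≫ q

/-- An exact category: regular and every equivalence relation is effective. -/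
structure IsExactCategory (C : Type u) [Category.{v} C] extends IsRegularCategory C : Prop where
  effectiveEquivalenceRelations :
    ∀ {R X : C} (p q : R ⟶ X), IsEquivalenceRelationPair p q →
      ∃ (Y : C) (f : X ⟶ Y), IsKernelPair f p q

/-- Locally finitely presentable category. -/
structure IsLFP (C : Type u) [Category.{v} C] : Prop where
  hasColimits : HasColimitsOfSize.{v, v} C
  exists_generator : ∃ (ι : Type v) (G : ι → C),
    ObjectProperty.IsDetecting (fun X => X ∈ Set.range G) ∧ ∀ i, FinPres (G i)

/-- A finitary quasivariety: cocomplete with a small strong generator of finitely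
presentable regular projective objects. -/
structure IsFinitaryQuasivariety (C : Type u) [Category.{v} C] : Prop where
  hasColimits : HasColimitsOfSize.{v, v} C
  exists_generator : ∃ (ι : Type v) (G : ι → C),
    ObjectProperty.IsDetecting (fun X => X ∈ Set.range G) ∧ ∀ i, FinPres (G i) ∧ RegProjective (G i)

/-- The injectivity class determined by a family of morphisms. -/
def Inj {L : Type u} [Category.{v} L] {ι : Type w} (A B : ι → L) (h : ∀ i, A i ⟶ B i) :
    Set L :=
  {X | ∀ (i : ι) (g : A i ⟶ X), ∃ g' : B i ⟶ X, h i ≫ g' = g}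

/-- `p : X ⟶ S` is a weak reflection of `X` into `D`. -/
def WeakReflection {L : Type u} [Category.{v} L] (D : Set L) {X S : L} (p : X ⟶ S) : Prop :=
  S ∈ D ∧ ∀ T ∈ D, ∀ g : X ⟶ T, ∃ k : S ⟶ T, p ≫ k = g


/-- The functor `Lᵒᵖ ⥤ [D, Set]` sending `X` to `Hom_L(X, J-)`, where
`J : D ↪ L` is the inclusion of the full subcategory on `D`. -/
def codensityComparison (L : Type u) [Category.{v} L] (D : Set L) :
    Lᵒᵖ ⥤ (ObjectProperty.FullSubcategory (fun X => X ∈ D) ⥤ Type v) :=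
  coyoneda ⋙
    (Functor.whiskeringLeft (ObjectProperty.FullSubcategory (fun X => X ∈ D)) L (Type v)).obj
      (ObjectProperty.ι (fun X => X ∈ D))


/-! A natural transformation `α : Hom(X, J-) ⟶ Hom(Y, J-)` is determined by `a := α(p)` for a
weak reflection `p : X ⟶ S`, since every `g : X ⟶ T` with `T ∈ D` factors as `p ≫ k` and then
`α(g) = a ≫ k`. If `p` is the equalizer of `u, v : S ⟶ Z`, naturality gives
`a ≫ u ≫ r = a ≫ v ≫ r` for any `r : Z ⟶ S'` into `D`; choosing `r` a (mono) weak reflection of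
`Z` shows that `a` factors through `p` as `f ≫ p`, and then `α` is the image of `f`. -/

variable {L : Type*} [Category L] {D : Set L} {X Y : L}

lemma codensityComparison_map_op_app (f : Y ⟶ X)
    (T : ObjectProperty.FullSubcategory (· ∈ D)) (g : X ⟶ T.obj) :
    ((codensityComparison L D).map f.op).app T g = f ≫ g :=
  rfl

lemma codensityComparison_app_comp
    (α : (codensityComparison L D).obj (op X) ⟶ (codensityComparison L D).obj (op Y))
    {T T' : ObjectProperty.FullSubcategory (· ∈ D)} (g : X ⟶ T.obj) (h : T.obj ⟶ T'.obj) :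
    α.app T' (g ≫ h) = α.app T g ≫ h :=
  NatTrans.naturality_apply α (ObjectProperty.homMk h) g

lemma eq_codensityComparison_map_of_app_weakReflection
    (α : (codensityComparison L D).obj (op X) ⟶ (codensityComparison L D).obj (op Y))
    {S : L} {p : X ⟶ S} (hp : WeakReflection D p) (f : Y ⟶ X)
    (hf : α.app ⟨S, hp.1⟩ p = f ≫ p) :
    α = (codensityComparison L D).map f.op := by
  refine NatTrans.ext (funext fun T => ConcreteCategory.hom_ext _ _ fun (g : X ⟶ T.obj) => ?_)
  obtain ⟨k, rfl⟩ := hp.2 T.obj T.property g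
  rw [codensityComparison_map_op_app, codensityComparison_app_comp α (T := ⟨S, hp.1⟩), hf,
    Category.assoc]

lemma exists_app_weakReflection_eq_comp
    (hmono : ∀ Z : L, ∃ (S : L) (r : Z ⟶ S), S ∈ D ∧ Mono r)
    (α : (codensityComparison L D).obj (op X) ⟶ (codensityComparison L D).obj (op Y))
    {S : L} {p : X ⟶ S} (hp : WeakReflection D p) (hreg : RegularMono p) :
    ∃ f : Y ⟶ X, α.app ⟨S, hp.1⟩ p = f ≫ p := by
  obtain ⟨S', r, hS', _⟩ := hmono hreg.Z
  set a : Y ⟶ S := α.app ⟨S, hp.1⟩ p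
  have hnat (h : S ⟶ S') : α.app ⟨S', hS'⟩ (p ≫ h) = a ≫ h :=
    codensityComparison_app_comp α (T := ⟨S, hp.1⟩) (T' := ⟨S', hS'⟩) p h
  have hw : a ≫ hreg.left = a ≫ hreg.right := by
    rw [← cancel_mono r, Category.assoc, Category.assoc, ← hnat, ← hnat, ← Category.assoc,
      hreg.w, Category.assoc]
  obtain ⟨f, hf⟩ := Fork.IsLimit.lift' hreg.isLimit a hw
  exact ⟨f, hf.symm⟩

theorem codensityComparison_faithful (hmono : ∀ X : L, ∃ (S : L) (p : X ⟶ S), S ∈ D ∧ Mono p) :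
    (codensityComparison L D).Faithful where
  map_injective {X Y} f g hfg := by
    obtain ⟨S, p, hS, _⟩ := hmono X.unop
    have hp : f.unop ≫ p = g.unop ≫ p :=
      ConcreteCategory.congr_hom (NatTrans.congr_app hfg ⟨S, hS⟩) p
    exact Quiver.Hom.unop_inj ((cancel_mono p).mp hp)

theorem codensityComparison_full (hmono : ∀ X : L, ∃ (S : L) (p : X ⟶ S), S ∈ D ∧ Mono p)
    (hwr : ∀ X : L, ∃ (S : L) (p : X ⟶ S), WeakReflection D p ∧ Nonempty (RegularMono p)) :
    (codensityComparison L D).Full where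
  map_surjective {X Y} α := by
    obtain ⟨S, p, hp, ⟨hreg⟩⟩ := hwr X.unop
    obtain ⟨f, hf⟩ := exists_app_weakReflection_eq_comp hmono α hp hreg
    exact ⟨f.op, (eq_codensityComparison_map_of_app_weakReflection α hp f hf).symm⟩

theorem statement1_general (L : Type u) [Category.{v} L]
    (D : Set L)
    (hwr : ∀ X : L, ∃ (S : L) (p : X ⟶ S),
      WeakReflection D p ∧ Nonempty (RegularMono p)) :
    (codensityComparison L D).Full ∧ (codensityComparison L D).Faithful := by
  have hmono (X : L) : ∃ (S : L) (p : X ⟶ S), S ∈ D ∧ Mono p := by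
    obtain ⟨S, p, hp, ⟨hreg⟩⟩ := hwr X
    exact ⟨S, p, hp.1, hreg.mono⟩
  exact ⟨codensityComparison_full hmono hwr, codensityComparison_faithful hmono⟩

/-- If `L` has coequalizers of kernel pairs and cokernel pairs, and
`D` is a full weakly reflective subcategory whose weak reflections can be chosen
to be regular monomorphisms, then `D` is codense in `L`: the canonical functor
`Lᵒᵖ ⥤ [D, Set]`, `X ↦ Hom_L(X, J-)`, is fully faithful. -/
theorem statement1 (L : Type u) [Category.{v} L]
    (hcoeq : ∀ {X Y R : L} (f : X ⟶ Y) (p q : R ⟶ X), IsKernelPair f p q → HasCoequalizer p q)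
    (hcokernel : ∀ {X Y : L} (f : X ⟶ Y), HasPushout f f)
    (D : Set L)
    (hwr : ∀ X : L, ∃ (S : L) (p : X ⟶ S),
      WeakReflection D p ∧ Nonempty (RegularMono p)) :
    (codensityComparison L D).Full ∧ (codensityComparison L D).Faithful :=
  statement1_general L D hwr

end Paper
end

section
/- Let L be a locally finitely presentable category and J : D ↪ L the inclusion of a finite injectivity class D = M-inj. Let F : D → Set be a functor preserving small products and filtered colimits, and suppose that for every L' ∈ D and every element x ∈ F(L') there exist a finitely presentable object A of L and a natural transformation η : Hom_L(A, J−) → F such that x lies in the image of η_{L'}. Then there exist a finitely presentable object B of L and a pointwise surjective natural transformation Hom_L(B, J−) → F. -/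
open CategoryTheory CategoryTheory.Limits Opposite

universe w v u

/-!
Every finitely presentable object is a retract of an object `E s` of a small dense subcategory
(the closure of the detecting generator under finite colimits), and each `E s` has a weak
reflection `E s ⟶ R s` into `D = M-inj`, produced by the small object argument. By the
hypothesis on `F`, every element of every `F X` is then the image of some element of some
`F (R s)`, so these form a solution set. Since `L` is complete (it is reflective in presheaves on
the dense subcategory) and `D` is closed under products, `F` sends `P = ∏_{(s, a)} R s` to
`∏ F (R s)`, and the element `x₀` with coordinates `a` maps onto every element of `F`. Applying
the hypothesis to `x₀` gives `η : Hom(B₀, J-) ⟶ F` with `x₀` in its image, and then every element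
of `F` is in the image of `η` by naturality.
-/

namespace CategoryTheory

open Limits

variable {C : Type u} [Category.{v} C]

-- Two lifts of `G ⟶ X` to the colimit meet at some stage `j`; coequalizing them there
-- is again a stage of the diagram, where they become equal.
lemma ObjectProperty.eq_of_comp_eq_of_colimitsCardinalClosure
    {κ : Cardinal.{w}} [Fact κ.IsRegular] [HasColimitsOfSize.{w, w} C] [LocallySmall.{w} C]
    {P : ObjectProperty C} [ObjectProperty.Small.{w} P] {X : C}
    [HasColimit (CostructuredArrow.proj (P.colimitsCardinalClosure κ).ι X ⋙
      (P.colimitsCardinalClosure κ).ι)]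
    {d : colimit (CostructuredArrow.proj (P.colimitsCardinalClosure κ).ι X ⋙
      (P.colimitsCardinalClosure κ).ι) ⟶ X} (hd : ∀ j, colimit.ι _ j ≫ d = j.hom)
    {G : C} (hG : P G) [IsCardinalPresentable G κ] {g₁ g₂ : G ⟶ _} (h : g₁ ≫ d = g₂ ≫ d) :
    g₁ = g₂ := by
  let Q := P.colimitsCardinalClosure κ
  let Φ := CostructuredArrow.proj Q.ι X ⋙ Q.ι
  have hd' (j) : colimit.ι Φ j ≫ d = j.hom := hd j
  have : Q.IsClosedUnderColimitsOfShape WalkingParallelPair := by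
    apply ObjectProperty.isClosedUnderColimitsOfShape_colimitsCardinalClosure
    refine .of_le ?_ (Cardinal.IsRegular.aleph0_le Fact.out)
    simp only [hasCardinalLT_aleph0_iff]
    infer_instance
  obtain ⟨j, φ₁, φ₂, rfl, rfl⟩ :
      ∃ (j : CostructuredArrow Q.ι X) (φ₁ φ₂ : G ⟶ Φ.obj j),
        φ₁ ≫ colimit.ι _ _ = g₁ ∧ φ₂ ≫ colimit.ι _ _ = g₂ := by
    obtain ⟨j₁, f₁, hf₁⟩ :=
      IsCardinalPresentable.exists_hom_of_isColimit κ (colimit.isColimit _) g₁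
    obtain ⟨j₂, f₂, hf₂⟩ :=
      IsCardinalPresentable.exists_hom_of_isColimit κ (colimit.isColimit _) g₂
    exact ⟨IsFiltered.max j₁ j₂, f₁ ≫ Φ.map (IsFiltered.leftToMax j₁ j₂),
      f₂ ≫ Φ.map (IsFiltered.rightToMax j₁ j₂), by simpa, by simpa⟩
  let obj : Q.FullSubcategory :=
    ⟨coequalizer φ₁ φ₂, by
      apply ObjectProperty.prop_colimit
      rintro (_ | _)
      · exact P.le_colimitsCardinalClosure _ _ hG
      · exact j.left.2⟩
  let a : Q.ι.obj obj ⟶ X :=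
    coequalizer.desc j.hom (by simpa only [Category.assoc, hd'] using h)
  let ψ : j ⟶ CostructuredArrow.mk a :=
    CostructuredArrow.homMk (ObjectProperty.homMk (coequalizer.π _ _)) (coequalizer.π_desc _ _)
  rw [← colimit.w Φ ψ]
  apply coequalizer.condition_assoc

lemma ObjectProperty.IsDetecting.isDense_colimitsCardinalClosure_ι
    {κ : Cardinal.{w}} [Fact κ.IsRegular] [HasColimitsOfSize.{w, w} C] [LocallySmall.{w} C]
    {P : ObjectProperty C} [ObjectProperty.Small.{w} P] (hP : P.IsDetecting)
    (hPκ : P ≤ isCardinalPresentable C κ) :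
    (P.colimitsCardinalClosure κ).ι.IsDense where
  isDenseAt X := by
    let Q := P.colimitsCardinalClosure κ
    let E := Functor.LeftExtension.mk _ Q.ι.rightUnitor.inv
    let Φ := CostructuredArrow.proj Q.ι X ⋙ Q.ι
    have : HasColimitsOfShape (CostructuredArrow Q.ι X) C :=
      hasColimitsOfShape_of_equivalence (equivSmallModel.{w} (CostructuredArrow Q.ι X)).symm
    have hι (j) : colimit.ι Φ j ≫ colimit.desc Φ (E.coconeAt X) = j.hom :=
      (colimit.ι_desc _ _).trans (Category.id_comp _)
    have : IsIso (colimit.desc Φ (E.coconeAt X)) := by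
      refine hP _ fun G hG g ↦ ?_
      have : IsCardinalPresentable G κ := hPκ _ hG
      let γ : CostructuredArrow Q.ι X :=
        CostructuredArrow.mk (Y := ⟨G, P.le_colimitsCardinalClosure _ _ hG⟩) (by exact g)
      exact ⟨colimit.ι Φ γ, hι γ, fun g' hg' ↦
        eq_of_comp_eq_of_colimitsCardinalClosure hι hG (hg'.trans (hι γ).symm)⟩
    exact ⟨IsColimit.ofIsoColimit (colimit.isColimit _) (Cocone.ext
      (asIso (colimit.desc _ (E.coconeAt X))))⟩

lemma hasLimitsOfSize_of_isDense [HasColimitsOfSize.{v, v} C] {S : Type v} [SmallCategory S]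
    (E : S ⥤ C) [E.IsDense] : HasLimitsOfSize.{v, v} C :=
  have : Reflective (Presheaf.restrictedULiftYoneda.{v} E) :=
    { L := _
      adj := Presheaf.uliftYonedaAdjunction.{v} _ (uliftYoneda.{v}.leftKanExtensionUnit E) }
  hasLimits_of_reflective (Presheaf.restrictedULiftYoneda.{v} E)

lemma Functor.exists_weaklyInitial_element_of_solutionSet {D : Type u} [Category.{v} D]
    (F : D ⥤ Type v) {K : Type v} [HasProductsOfShape K D]
    [PreservesLimitsOfShape (Discrete K) F] (R : K → D) (a : ∀ k, F.obj (R k))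
    (hR : ∀ (X : D) (x : F.obj X), ∃ (k : K) (f : R k ⟶ X), F.map f (a k) = x) :
    ∃ (P : D) (x₀ : F.obj P), ∀ (X : D) (x : F.obj X), ∃ f : P ⟶ X, F.map f x₀ = x := by
  let x₀ : F.obj (∏ᶜ R) := (PreservesProduct.iso F R).inv ((Types.productIso _).inv a)
  have hx₀ (k : K) : F.map (Pi.π R k) x₀ = a k := by
    rw [← piComparison_comp_π]
    simp [x₀, ← PreservesProduct.iso_hom]
  refine ⟨∏ᶜ R, x₀, fun X x ↦ ?_⟩
  obtain ⟨k, f, rfl⟩ := hR X x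
  exact ⟨Pi.π R k ≫ f, by rw [Functor.map_comp_apply, hx₀]⟩

end CategoryTheory

namespace Paper

open CategoryTheory Limits Opposite Cardinal

variable {L : Type u} [Category.{v} L]

lemma finPres_iff_isFinitelyPresentable (A : L) : FinPres A ↔ IsFinitelyPresentable.{v} A := by
  rw [isFinitelyPresentable_iff_preservesFilteredColimitsOfSize]
  exact ⟨fun hA ↦ ⟨fun J _ hJ ↦ hA J _ hJ⟩, fun ⟨hA⟩ J _ hJ ↦ hA J⟩

attribute [local instance] fact_isRegular_aleph0 in
lemma IsLFP.exists_small_dense (hL : IsLFP L) :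
    ∃ (S : Type v) (_ : SmallCategory S) (E : S ⥤ L), E.IsDense ∧
      ∀ A, FinPres A → ∃ s, Nonempty (Retract A (E.obj s)) := by
  have := hL.hasColimits
  obtain ⟨κ, G, hdet, hG⟩ := hL.exists_generator
  let P : ObjectProperty L := fun X ↦ X ∈ Set.range G
  have : ObjectProperty.Small.{v} P := small_range G
  have hP : P ≤ isCardinalPresentable L ℵ₀ := by
    rintro _ ⟨i, rfl⟩
    exact (finPres_iff_isFinitelyPresentable _).1 (hG i)
  let Q := P.colimitsCardinalClosure ℵ₀
  have : Q.ι.IsDense := hdet.isDense_colimitsCardinalClosure_ι hP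
  have hQ : Q.IsCardinalFilteredGenerator ℵ₀ := IsCardinalFilteredGenerator.of_isDense_ι Q ℵ₀
    (ObjectProperty.colimitsCardinalClosure_le_isCardinalPresentable.{v} P hP)
  let e := equivSmallModel.{v} Q.FullSubcategory
  refine ⟨SmallModel Q.FullSubcategory, inferInstance, e.inverse ⋙ Q.ι, inferInstance,
    fun A hA ↦ ?_⟩
  obtain ⟨Y, hY, ⟨ret⟩⟩ : Q.retractClosure A :=
    hQ.isPresentable_eq_retractClosure ▸ (finPres_iff_isFinitelyPresentable _).1 hA
  exact ⟨e.functor.obj ⟨Y, hY⟩,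
    ⟨ret.trans (Retract.ofIso (Q.ι.mapIso (e.unitIso.app ⟨Y, hY⟩)))⟩⟩

lemma mem_inj_iff_rlp_terminal_from [HasTerminal L] {ι : Type w} {A B : ι → L}
    (h : ∀ i, A i ⟶ B i) (X : L) :
    X ∈ Inj A B h ↔ (MorphismProperty.ofHoms h).rlp (terminal.from X) := by
  constructor
  · rintro hX _ _ _ ⟨i⟩
    refine ⟨fun {g _} _ ↦ ?_⟩
    obtain ⟨g', hg'⟩ := hX i g
    exact ⟨⟨{ l := g', fac_left := hg', fac_right := terminal.hom_ext _ _ }⟩⟩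
  · intro hX i g
    have := hX _ (MorphismProperty.ofHoms.mk i)
    let sq : CommSq g (h i) (terminal.from X) (terminal.from _) := ⟨terminal.hom_ext _ _⟩
    exact ⟨sq.lift, sq.fac_left⟩

attribute [local instance] fact_isRegular_aleph0 orderBotAleph0OrdToType in
lemma exists_weakReflection [HasColimitsOfSize.{v, v} L] [HasTerminal L] {ι : Type v}
    {A B : ι → L} (h : ∀ i, A i ⟶ B i) (hA : ∀ i, IsFinitelyPresentable.{v} (A i)) (X : L) :
    ∃ (S : L) (p : X ⟶ S), WeakReflection (Inj A B h) p := by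
  have : (MorphismProperty.ofHoms h).IsCardinalForSmallObjectArgument ℵ₀ :=
    { preservesColimit := by
        rintro _ _ _ _ _ ⟨i⟩ _ _
        have := hA i
        infer_instance }
  have : MorphismProperty.HasSmallObjectArgument.{v} (MorphismProperty.ofHoms h) :=
    ⟨⟨ℵ₀, inferInstance, inferInstance, this⟩⟩
  -- `X ⟶ S ⟶ ⊤_ L` with `X ⟶ S` lifting against all maps that lift against `h`, and `S ⟶ ⊤_ L`
  -- lifting against `h`, which says `S ∈ Inj A B h`.
  let fac := MorphismProperty.factorizationData (MorphismProperty.ofHoms h).rlp.llp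
    (MorphismProperty.ofHoms h).rlp (terminal.from X)
  refine ⟨fac.Z, fac.i, ?_, fun T hT g ↦ ?_⟩
  · rw [mem_inj_iff_rlp_terminal_from, terminal.hom_ext (terminal.from fac.Z) fac.p]
    exact fac.hp
  · rw [mem_inj_iff_rlp_terminal_from] at hT
    have := fac.hi _ hT
    let sq : CommSq g fac.i (terminal.from T) fac.p := ⟨terminal.hom_ext _ _⟩
    exact ⟨sq.lift, sq.fac_left⟩

instance isClosedUnderLimitsOfShape_discrete_inj {ι : Type w} (A B : ι → L)
    (h : ∀ i, A i ⟶ B i) (K : Type*) :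
    ObjectProperty.IsClosedUnderLimitsOfShape (fun X ↦ X ∈ Inj A B h) (Discrete K) where
  limitsOfShape_le := by
    rintro X ⟨p⟩ i g
    choose e he using fun k ↦ p.prop_diag_obj k i (g ≫ p.π.app k)
    refine ⟨p.isLimit.lift ⟨B i, Discrete.natTrans fun k ↦ e k⟩, p.isLimit.hom_ext fun k ↦ ?_⟩
    rw [Category.assoc, p.isLimit.fac]
    exact he k

lemma WeakReflection.exists_map_app_eq {D : Set L} {E R : L} {p : E ⟶ R}
    (hp : WeakReflection D p) (F : ObjectProperty.FullSubcategory (fun X ↦ X ∈ D) ⥤ Type v)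
    {A₀ : L} (ret : Retract A₀ E)
    (ν : ObjectProperty.ι (fun X ↦ X ∈ D) ⋙ coyoneda.obj (op A₀) ⟶ F)
    (X : ObjectProperty.FullSubcategory (fun X ↦ X ∈ D)) (g : A₀ ⟶ X.obj) :
    ∃ w : (⟨R, hp.1⟩ : ObjectProperty.FullSubcategory (fun X ↦ X ∈ D)) ⟶ X,
      F.map w (ν.app ⟨R, hp.1⟩ (ret.i ≫ p)) = ν.app X g := by
  obtain ⟨w, hw⟩ := hp.2 X.obj X.property (ret.r ≫ g)
  refine ⟨ObjectProperty.homMk w, ?_⟩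
  rw [← NatTrans.naturality_apply]
  change ν.app X ((ret.i ≫ p) ≫ w) = _
  rw [Category.assoc, hw, ← Category.assoc, ret.retract, Category.id_comp]

theorem statement13_general (L : Type u) [Category.{v} L] (hL : IsLFP L)
    (ι : Type v) (A B : ι → L) (hA : ∀ i, FinPres (A i))
    (h : ∀ i, A i ⟶ B i)
    (F : ObjectProperty.FullSubcategory (fun X => X ∈ Inj A B h) ⥤ Type v)
    (hprod : ∀ κ : Type v, PreservesLimitsOfShape (Discrete κ) F)
    (hgen : ∀ (X : ObjectProperty.FullSubcategory (fun X => X ∈ Inj A B h)) (x : F.obj X),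
      ∃ (A₀ : L) (_ : FinPres A₀)
        (η : ObjectProperty.ι (fun X => X ∈ Inj A B h) ⋙ coyoneda.obj (op A₀) ⟶ F)
        (y : A₀ ⟶ X.obj), η.app X y = x) :
    ∃ (B₀ : L) (_ : FinPres B₀)
      (η : ObjectProperty.ι (fun X => X ∈ Inj A B h) ⋙ coyoneda.obj (op B₀) ⟶ F),
      ∀ X, Function.Surjective (η.app X) := by
  have := hL.hasColimits
  obtain ⟨S, _, E, _, hretract⟩ := hL.exists_small_dense
  have := hasLimitsOfSize_of_isDense E
  choose R r hr using fun s ↦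
    exists_weakReflection h (fun i ↦ (finPres_iff_isFinitelyPresentable _).1 (hA i)) (E.obj s)
  obtain ⟨P, x₀, hx₀⟩ := F.exists_weaklyInitial_element_of_solutionSet
    (K := Σ s, F.obj ⟨R s, (hr s).1⟩) (fun k ↦ ⟨R k.1, (hr k.1).1⟩) (fun k ↦ k.2) (by
      intro X x
      obtain ⟨A₀, hA₀, ν, g, rfl⟩ := hgen X x
      obtain ⟨s, ⟨ret⟩⟩ := hretract A₀ hA₀
      obtain ⟨w, hw⟩ := (hr s).exists_map_app_eq F ret ν X g
      exact ⟨⟨s, _⟩, w, hw⟩)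
  obtain ⟨B₀, hB₀, η, y, hy⟩ := hgen P x₀
  refine ⟨B₀, hB₀, η, fun X x ↦ ?_⟩
  obtain ⟨f, rfl⟩ := hx₀ X x
  exact ⟨y ≫ f.hom, by rw [← hy, ← NatTrans.naturality_apply]; rfl⟩

/-- Let `D = M`-inj be a finite injectivity class in an lfp category
`L`, `J : D ↪ L` the inclusion, and `F : D ⥤ Set` a functor preserving small
products and filtered colimits.  If every element `x ∈ F L'` factors through some
natural transformation `Hom_L(A, J-) ⟶ F` with `A` finitely presentable, then
there is a finitely presentable `B` and a pointwise surjective natural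
transformation `Hom_L(B, J-) ⟶ F`. -/
theorem statement13 (L : Type u) [Category.{v} L] (hL : IsLFP L)
    (ι : Type v) (A B : ι → L) (hA : ∀ i, FinPres (A i)) (hB : ∀ i, FinPres (B i))
    (h : ∀ i, A i ⟶ B i)
    (F : ObjectProperty.FullSubcategory (fun X => X ∈ Inj A B h) ⥤ Type v)
    (hprod : ∀ κ : Type v, PreservesLimitsOfShape (Discrete κ) F)
    (hfilt : ∀ (J : Type v) (_ : SmallCategory J), IsFiltered J →
      PreservesColimitsOfShape J F)
    (hgen : ∀ (X : ObjectProperty.FullSubcategory (fun X => X ∈ Inj A B h)) (x : F.obj X),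
      ∃ (A₀ : L) (_ : FinPres A₀)
        (η : ObjectProperty.ι (fun X => X ∈ Inj A B h) ⋙ coyoneda.obj (op A₀) ⟶ F)
        (y : A₀ ⟶ X.obj), η.app X y = x) :
    ∃ (B₀ : L) (_ : FinPres B₀)
      (η : ObjectProperty.ι (fun X => X ∈ Inj A B h) ⋙ coyoneda.obj (op B₀) ⟶ F),
      ∀ X, Function.Surjective (η.app X) :=
  statement13_general L hL ι A B hA h F hprod hgen

end Paper
end
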